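/- Let (X, d) be a metric space, let S = S₁ ∪ S₂ be a finite subset of X with S₁ and S₂ disjoint, let k₁, k₂ ∈ ℕ, let r* ≥ 0, and suppose there exists C* ⊆ S with |C* ∩ S₁| ≤ k₁, |C* ∩ S₂| ≤ k₂, and d(s, C*) ≤ r* for every s ∈ S. Fix l ∈ {1, 2} and let l' denote the other index. Let Γ_{l'} ⊆ S_{l'} be such that every point s ∈ S_{l'} satisfies d(s, Γ_{l'}) ≤ 2·r*, and let D ⊆ S_l be a set in which any two distinct points are at distance greater than 2·r* and such that every i ∈ D satisfies d(i, Γ_{l'}) > 3·r*. Then |D| ≤ k_l. -/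

import Mathlib

/-!
Every point of `D` is served by an optimal center within `r*`. Such a center cannot lie in the
other group: `Γ` covers that group within `2r*`, which would put the point within `3r*` of `Γ`.
So each point of `D` has a center of `C* ∩ S l` within `r*`, and since the points of `D` are more
than `2r*` apart, no center serves two of them.
-/

open Finset

theorem Fin.two_union_eq {α : Type*} [DecidableEq α] (S : Fin 2 → Finset α) (l : Fin 2) :
    S 0 ∪ S 1 = S l ∪ S (l + 1) := by
  fin_cases l
  · rfl
  · exact union_comm _ _

section Metric

variable {X : Type*} [PseudoMetricSpace X]

theorem notMem_of_dist_le_of_covered_by_far {T Γ : Set X} {i c : X} {a b : ℝ}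
    (hΓcover : ∀ s ∈ T, ∃ q ∈ Γ, dist s q ≤ b) (hfar : ∀ g ∈ Γ, a + b < dist i g)
    (hic : dist i c ≤ a) : c ∉ T := by
  intro hcT
  obtain ⟨g, hg, hcg⟩ := hΓcover c hcT
  have := hfar g hg
  linarith [dist_triangle i c g]

theorem card_le_card_of_separated_of_forall_exists_dist_le {D C : Finset X} {r : ℝ}
    (hsep : ∀ p ∈ D, ∀ q ∈ D, p ≠ q → 2 * r < dist p q)
    (hcover : ∀ i ∈ D, ∃ c ∈ C, dist i c ≤ r) : #D ≤ #C := by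
  refine card_le_card_of_forall_subsingleton (fun i c => dist i c ≤ r) hcover ?_
  rintro c - p ⟨hpD, hpc⟩ q ⟨hqD, hqc⟩
  by_contra hpq
  have := hsep p hpD q hqD hpq
  linarith [dist_triangle_right p q c]

end Metric

/-- `l + 1` is the other group, by arithmetic in `Fin 2`. -/
theorem degree_zero_points_card_le_general
    {X : Type*} [MetricSpace X] [DecidableEq X]
    (S : Fin 2 → Finset X) (k : Fin 2 → ℕ) (rstar : ℝ)
    (Cstar Γ D : Finset X) (l : Fin 2)
    (hCsub : Cstar ⊆ S 0 ∪ S 1)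
    (hCfair : ∀ i : Fin 2, (Cstar ∩ S i).card ≤ k i)
    (hCcover : ∀ s ∈ S 0 ∪ S 1, ∃ c ∈ Cstar, dist s c ≤ rstar)
    (hΓcover : ∀ s ∈ S (l + 1), ∃ q ∈ Γ, dist s q ≤ 2 * rstar)
    (hDsub : D ⊆ S l)
    (hDsep : ∀ p ∈ D, ∀ q ∈ D, p ≠ q → 2 * rstar < dist p q)
    (hDfar : ∀ i ∈ D, ∀ g ∈ Γ, 3 * rstar < dist i g) :
    D.card ≤ k l := by
  rw [Fin.two_union_eq S l] at hCsub hCcover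
  have hserved : ∀ i ∈ D, ∃ c ∈ Cstar ∩ S l, dist i c ≤ rstar := by
    intro i hi
    obtain ⟨c, hc, hic⟩ := hCcover i (mem_union_left _ (hDsub hi))
    have hfar : ∀ g ∈ (Γ : Set X), rstar + 2 * rstar < dist i g := by
      intro g hg
      linarith [hDfar i hi g hg]
    have hcl : c ∉ S (l + 1) :=
      notMem_of_dist_le_of_covered_by_far (T := (S (l + 1) : Set X)) hΓcover hfar hic
    have hcS := hCsub hc
    exact ⟨c, mem_inter.2 ⟨hc, (mem_union.1 hcS).resolve_right hcl⟩, hic⟩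
  exact (card_le_card_of_separated_of_forall_exists_dist_le hDsep hserved).trans (hCfair l)

/-- Lemma 3: points of group `l` that are pairwise more than `2r*` apart and at
distance more than `3r*` from a `2r*`-covering set `Γ` of the other group can
only be served by optimal centers lying in `S l`, hence their number is at most
`k l`. The two groups are indexed by `Fin 2`; `l + 1` is the other index. -/
theorem degree_zero_points_card_le
    {X : Type*} [MetricSpace X] [DecidableEq X]
    (S : Fin 2 → Finset X) (k : Fin 2 → ℕ) (rstar : ℝ)
    (Cstar Γ D : Finset X) (l : Fin 2)
    (hr : 0 ≤ rstar)
    (hdisj : Disjoint (S 0) (S 1))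
    (hCsub : Cstar ⊆ S 0 ∪ S 1)
    (hCfair : ∀ i : Fin 2, (Cstar ∩ S i).card ≤ k i)
    (hCcover : ∀ s ∈ S 0 ∪ S 1, ∃ c ∈ Cstar, dist s c ≤ rstar)
    (hΓsub : Γ ⊆ S (l + 1))
    (hΓcover : ∀ s ∈ S (l + 1), ∃ q ∈ Γ, dist s q ≤ 2 * rstar)
    (hDsub : D ⊆ S l)
    (hDsep : ∀ p ∈ D, ∀ q ∈ D, p ≠ q → 2 * rstar < dist p q)
    (hDfar : ∀ i ∈ D, ∀ g ∈ Γ, 3 * rstar < dist i g) :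
    D.card ≤ k l :=
  degree_zero_points_card_le_general S k rstar Cstar Γ D l hCsub hCfair hCcover hΓcover hDsub hDsep
    hDfar
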